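/- arXiv:2310.11636 — 2 statements merged into one kernel-verified Lean document; each statement's English description precedes it below -/
import Mathlib

section
/- There is no first-order formula φ(x, y) with two free variables over the FOIL language L such that for every dimension n ≥ 1, every model M of dimension n, every total instance e of dimension n, and every partial instance e' of dimension n, it holds that A_M ⊨ φ(e, e') if and only if e' is a minimum sufficient reason for e over M. -/
open FirstOrder FirstOrder.Language

abbrev PI (n : ℕ) : Type := Fin n → Option Bool

def Subs {n : ℕ} (e e' : PI n) : Prop := ∀ i, e i ≠ none → e' i = e i

noncomputable def undefCard {n : ℕ} (e : PI n) : ℕ := Set.ncard {i | e i = none}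

/-- The FOIL language: one unary relation (Pos) and one binary relation (⊑). -/
def foilLang : Language where
  Functions _ := Empty
  Relations n := match n with
    | 1 => Unit
    | 2 => Unit
    | _ => Empty

/-- The structure `A_M` associated to a model `M` of dimension `n`. -/
def foilStruct {n : ℕ} (M : (Fin n → Bool) → Bool) : foilLang.Structure (PI n) where
  funMap := fun {_} f => f.elim
  RelMap := fun {k} r v => match k, r with
    | 1, _ => ∃ b : Fin n → Bool, v 0 = (fun i => some (b i)) ∧ M b = true
    | 2, _ => Subs (v 0) (v 1)

def IsSR {n : ℕ} (M : (Fin n → Bool) → Bool) (e : Fin n → Bool) (e' : PI n) : Prop :=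
  Subs e' (fun i => some (e i)) ∧
    ∀ c : Fin n → Bool, Subs e' (fun i => some (c i)) → M c = M e

def IsMinimumSR {n : ℕ} (M : (Fin n → Bool) → Bool) (e : Fin n → Bool) (e' : PI n) : Prop :=
  IsSR M e e' ∧ ∀ e'' : PI n, IsSR M e e'' → undefCard e'' ≤ undefCard e'


lemma term_var {β} (t : foilLang.Term β) : ∃ s, t = Term.var s := by
  cases t with
  | var s => exact ⟨s, rfl⟩
  | func f ts => exact f.elim

def qd {α : Type} : ∀ {m : ℕ}, foilLang.BoundedFormula α m → ℕ
  | _, .falsum => 0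
  | _, .equal _ _ => 0
  | _, .rel _ _ => 0
  | _, .imp f g => max (qd f) (qd g)
  | _, .all f => qd f + 1

namespace Foil
variable {n : ℕ}

def col1 (l : List (PI n × PI n)) (i : Fin n) : List (Option Bool) := l.map (fun p => p.1 i)
def col2 (l : List (PI n × PI n)) (i : Fin n) : List (Option Bool) := l.map (fun p => p.2 i)

def MoB (k s t : ℕ) : Prop := s = t ∨ (3 ^ k ≤ s ∧ 3 ^ k ≤ t)

def cnt1 (X : Finset (Fin n)) (l : List (PI n × PI n)) (c : List (Option Bool)) : ℕ :=
  (X.filter (fun i => col1 l i = c)).card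
def cnt2 (X : Finset (Fin n)) (l : List (PI n × PI n)) (c : List (Option Bool)) : ℕ :=
  (X.filter (fun i => col2 l i = c)).card

def REL (A₁ A₂ : Finset (Fin n)) (k : ℕ) (l : List (PI n × PI n)) : Prop :=
  ∀ c, MoB k (cnt1 A₁ l c) (cnt2 A₂ l c) ∧ MoB k (cnt1 A₁ᶜ l c) (cnt2 A₂ᶜ l c)

lemma MoB.ne_zero {k s t : ℕ} (h : MoB k s t) (hs : s ≠ 0) : t ≠ 0 := by
  have h1 : 1 ≤ 3 ^ k := Nat.one_le_pow _ _ (by norm_num)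
  rcases h with h | ⟨ha, hb⟩ <;> omega

lemma MoB.symm {k s t : ℕ} (h : MoB k s t) : MoB k t s := by
  rcases h with h | h
  · exact Or.inl h.symm
  · exact Or.inr ⟨h.2, h.1⟩

lemma transfer_side {X₁ X₂ : Finset (Fin n)} {k l}
    (h : ∀ c, MoB k (cnt1 X₁ l c) (cnt2 X₂ l c)) (P : List (Option Bool) → Prop) :
    (∃ i ∈ X₁, P (col1 l i)) ↔ (∃ i ∈ X₂, P (col2 l i)) := by
  constructor
  · rintro ⟨i, hi, hP⟩
    have h1 : cnt1 X₁ l (col1 l i) ≠ 0 := by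
      have : i ∈ X₁.filter (fun j => col1 l j = col1 l i) := Finset.mem_filter.2 ⟨hi, rfl⟩
      exact Finset.card_ne_zero_of_mem this
    have h2 := (h (col1 l i)).ne_zero h1
    rw [cnt2, Finset.card_ne_zero, Finset.filter_nonempty_iff] at h2
    obtain ⟨j, hj, hcj⟩ := h2
    exact ⟨j, hj, hcj ▸ hP⟩
  · rintro ⟨i, hi, hP⟩
    have h1 : cnt2 X₂ l (col2 l i) ≠ 0 := by
      have : i ∈ X₂.filter (fun j => col2 l j = col2 l i) := Finset.mem_filter.2 ⟨hi, rfl⟩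
      exact Finset.card_ne_zero_of_mem this
    have h2 := ((h (col2 l i)).symm).ne_zero h1
    rw [cnt1, Finset.card_ne_zero, Finset.filter_nonempty_iff] at h2
    obtain ⟨j, hj, hcj⟩ := h2
    exact ⟨j, hj, hcj ▸ hP⟩

end Foil

namespace Foil2
open Foil
variable {n : ℕ} {A₁ A₂ : Finset (Fin n)} {k : ℕ} {l : List (PI n × PI n)}

lemma transfer_univ (h : REL A₁ A₂ k l) (P : List (Option Bool) → Prop) :
    (∃ i, P (col1 l i)) ↔ (∃ i, P (col2 l i)) := by
  have h1 := transfer_side (fun c => (h c).1) P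
  have h2 := transfer_side (fun c => (h c).2) P
  constructor
  · rintro ⟨i, hP⟩
    by_cases hi : i ∈ A₁
    · obtain ⟨j, _, hj⟩ := h1.1 ⟨i, hi, hP⟩; exact ⟨j, hj⟩
    · obtain ⟨j, _, hj⟩ := h2.1 ⟨i, Finset.mem_compl.2 hi, hP⟩; exact ⟨j, hj⟩
  · rintro ⟨i, hP⟩
    by_cases hi : i ∈ A₂
    · obtain ⟨j, _, hj⟩ := h1.2 ⟨i, hi, hP⟩; exact ⟨j, hj⟩
    · obtain ⟨j, _, hj⟩ := h2.2 ⟨i, Finset.mem_compl.2 hi, hP⟩; exact ⟨j, hj⟩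

lemma col_entry {x₁ x₂ : PI n} (hm : (x₁, x₂) ∈ l) :
    ∃ j : ℕ, (∀ i, (col1 l i)[j]? = some (x₁ i)) ∧ (∀ i, (col2 l i)[j]? = some (x₂ i)) := by
  obtain ⟨j, hj, hget⟩ := List.mem_iff_getElem.mp hm
  refine ⟨j, fun i => ?_, fun i => ?_⟩ <;>
    simp [col1, col2, List.getElem?_map, List.getElem?_eq_getElem hj, hget]

lemma eq_iff (h : REL A₁ A₂ k l) {x₁ x₂ y₁ y₂ : PI n}
    (hx : (x₁, x₂) ∈ l) (hy : (y₁, y₂) ∈ l) : x₁ = y₁ ↔ x₂ = y₂ := by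
  obtain ⟨j₁, hj₁, hj₁'⟩ := col_entry hx
  obtain ⟨j₂, hj₂, hj₂'⟩ := col_entry hy
  have key := transfer_univ h (fun c => getElem? c j₁ ≠ getElem? c j₂)
  simp only [hj₁, hj₂, hj₁', hj₂', ne_eq, Option.some.injEq] at key
  constructor
  · intro hxy; funext i
    by_contra hne
    obtain ⟨i', hi'⟩ := key.2 ⟨i, hne⟩
    exact hi' (congrFun hxy i')
  · intro hxy; funext i
    by_contra hne
    obtain ⟨i', hi'⟩ := key.1 ⟨i, hne⟩
    exact hi' (congrFun hxy i')

lemma subs_aux {x y : Option Bool} :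
    (¬ (x ≠ none → y = x)) ↔ ∃ w : Bool, x = some w ∧ y ≠ some w := by
  cases x <;> simp [eq_comm]

lemma subs_char {x y : PI n} : Subs x y ↔ ¬ ∃ i, ∃ w : Bool, x i = some w ∧ ¬ y i = some w := by
  constructor
  · rintro hs ⟨i, w, hw, hw'⟩
    exact hw' (by rw [hs i (by simp [hw]), hw])
  · intro hns i hi
    rcases hx : x i with _ | w
    · exact absurd hx hi
    · by_contra hne
      exact hns ⟨i, w, hx, hne⟩

lemma subs_iff (h : REL A₁ A₂ k l) {x₁ x₂ y₁ y₂ : PI n}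
    (hx : (x₁, x₂) ∈ l) (hy : (y₁, y₂) ∈ l) : Subs x₁ y₁ ↔ Subs x₂ y₂ := by
  obtain ⟨j₁, hj₁, hj₁'⟩ := col_entry hx
  obtain ⟨j₂, hj₂, hj₂'⟩ := col_entry hy
  have key := transfer_univ h
    (fun c => ∃ w : Bool, getElem? c j₁ = some (some w) ∧ getElem? c j₂ ≠ some (some w))
  simp only [hj₁, hj₂, hj₁', hj₂', ne_eq, Option.some.injEq] at key
  rw [subs_char, subs_char, key]

lemma pos_char {A : Finset (Fin n)} {M : (Fin n → Bool) → Bool}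
    (HM : ∀ b, M b = true ↔ ((∀ i ∈ A, b i = true) ∨ (∀ i ∈ Aᶜ, b i = true)))
    (x : PI n) :
    (∃ b : Fin n → Bool, x = (fun i => some (b i)) ∧ M b = true) ↔
      ((∀ i, x i ≠ none) ∧ ((∀ i ∈ A, x i = some true) ∨ (∀ i ∈ Aᶜ, x i = some true))) := by
  constructor
  · rintro ⟨b, rfl, hb⟩
    refine ⟨fun i => by simp, ?_⟩
    rcases (HM b).1 hb with h | h
    · exact Or.inl (fun i hi => by simp [h i hi])
    · exact Or.inr (fun i hi => by simp [h i hi])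
  · rintro ⟨htot, hor⟩
    refine ⟨fun i => (x i).getD true, ?_, ?_⟩
    · funext i
      rcases hx : x i with _ | w
      · exact absurd hx (htot i)
      · simp [hx]
    · rw [HM]
      rcases hor with h | h
      · exact Or.inl fun i hi => by simp [h i hi]
      · exact Or.inr fun i hi => by simp [h i hi]

lemma pos_iff (h : REL A₁ A₂ k l) {x₁ x₂ : PI n} (hx : (x₁, x₂) ∈ l)
    {M : (Fin n → Bool) → Bool}
    (HM1 : ∀ b, M b = true ↔ ((∀ i ∈ A₁, b i = true) ∨ (∀ i ∈ A₁ᶜ, b i = true)))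
    (HM2 : ∀ b, M b = true ↔ ((∀ i ∈ A₂, b i = true) ∨ (∀ i ∈ A₂ᶜ, b i = true))) :
    (∃ b : Fin n → Bool, x₁ = (fun i => some (b i)) ∧ M b = true) ↔
      (∃ b : Fin n → Bool, x₂ = (fun i => some (b i)) ∧ M b = true) := by
  obtain ⟨j, hj, hj'⟩ := col_entry hx
  have ktot := transfer_univ h (fun c => getElem? c j = some none)
  have kA := transfer_side (fun c => (h c).1) (fun c => ¬ getElem? c j = some (some true))
  have kC := transfer_side (fun c => (h c).2) (fun c => ¬ getElem? c j = some (some true))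
  simp only [hj, hj', Option.some.injEq] at ktot kA kC
  rw [pos_char HM1, pos_char HM2]
  have eTot : (∀ i, x₁ i ≠ none) ↔ (∀ i, x₂ i ≠ none) := by
    constructor
    · intro hall i
      by_contra hne
      obtain ⟨i', h'⟩ := ktot.2 ⟨i, hne⟩
      exact hall i' h'
    · intro hall i
      by_contra hne
      obtain ⟨i', h'⟩ := ktot.1 ⟨i, hne⟩
      exact hall i' h'
  have eA : (∀ i ∈ A₁, x₁ i = some true) ↔ (∀ i ∈ A₂, x₂ i = some true) := by
    constructor
    · intro hall i hi
      by_contra hne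
      obtain ⟨i', hi', hne'⟩ := kA.2 ⟨i, hi, hne⟩
      exact hne' (hall i' hi')
    · intro hall i hi
      by_contra hne
      obtain ⟨i', hi', hne'⟩ := kA.1 ⟨i, hi, hne⟩
      exact hne' (hall i' hi')
  have eC : (∀ i ∈ A₁ᶜ, x₁ i = some true) ↔ (∀ i ∈ A₂ᶜ, x₂ i = some true) := by
    constructor
    · intro hall i hi
      by_contra hne
      obtain ⟨i', hi', hne'⟩ := kC.2 ⟨i, hi, hne⟩
      exact hne' (hall i' hi')
    · intro hall i hi
      by_contra hne
      obtain ⟨i', hi', hne'⟩ := kC.1 ⟨i, hi, hne⟩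
      exact hne' (hall i' hi')
  exact and_congr eTot (or_congr eA eC)

lemma split_counts {m s₁ s₂ s₃ t : ℕ} (hm : 1 ≤ m)
    (h : s₁ + s₂ + s₃ = t ∨ (3 * m ≤ s₁ + s₂ + s₃ ∧ 3 * m ≤ t)) :
    ∃ t₁ t₂ t₃, t₁ + t₂ + t₃ = t ∧ (s₁ = t₁ ∨ (m ≤ s₁ ∧ m ≤ t₁)) ∧
      (s₂ = t₂ ∨ (m ≤ s₂ ∧ m ≤ t₂)) ∧ (s₃ = t₃ ∨ (m ≤ s₃ ∧ m ≤ t₃)) := by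
  rcases h with h | ⟨h1, h2⟩
  · exact ⟨s₁, s₂, s₃, h, Or.inl rfl, Or.inl rfl, Or.inl rfl⟩
  by_cases c1 : m ≤ s₁
  · exact ⟨t - min s₂ m - min s₃ m, min s₂ m, min s₃ m, by omega, by omega, by omega, by omega⟩
  by_cases c2 : m ≤ s₂
  · exact ⟨s₁, t - s₁ - min s₃ m, min s₃ m, by omega, by omega, by omega, by omega⟩
  · exact ⟨s₁, s₂, t - s₁ - s₂, by omega, by omega, by omega, by omega⟩

lemma tri_card (Y : Finset (Fin n)) (a : PI n) :
    (Y.filter (fun i => a i = some true)).card + (Y.filter (fun i => a i = some false)).card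
      + (Y.filter (fun i => a i = none)).card = Y.card := by
  classical
  have h1 := Finset.card_filter_add_card_filter_not (s := Y)
    (p := fun i => a i = some true)
  have h2 := Finset.card_filter_add_card_filter_not
    (s := Y.filter (fun i => ¬ a i = some true)) (p := fun i => a i = some false)
  have e1 : (Y.filter (fun i => ¬ a i = some true)).filter (fun i => a i = some false)
      = Y.filter (fun i => a i = some false) := by
    rw [Finset.filter_filter]
    apply Finset.filter_congr
    intro i _
    rcases a i with _ | _ | _ <;> simp
  have e2 : (Y.filter (fun i => ¬ a i = some true)).filter (fun i => ¬ a i = some false)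
      = Y.filter (fun i => a i = none) := by
    rw [Finset.filter_filter]
    apply Finset.filter_congr
    intro i _
    rcases a i with _ | _ | _ <;> simp
  rw [e1, e2] at h2
  omega

lemma forth_side (X₁ X₂ : Finset (Fin n)) (l : List (PI n × PI n)) (k : ℕ)
    (h : ∀ c, MoB (k + 1) (cnt1 X₁ l c) (cnt2 X₂ l c)) (a : PI n) :
    ∃ g : PI n, ∀ c (v : Option Bool),
      MoB k ((X₁.filter (fun i => col1 l i = c ∧ a i = v)).card)
            ((X₂.filter (fun i => col2 l i = c ∧ g i = v)).card) := by
  classical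
  have key : ∀ c : List (Option Bool), ∃ UT UF : Finset (Fin n),
      UT ⊆ X₂.filter (fun i => col2 l i = c) ∧ UF ⊆ X₂.filter (fun i => col2 l i = c) ∧
      Disjoint UT UF ∧
      MoB k ((X₁.filter (fun i => col1 l i = c ∧ a i = some true)).card) UT.card ∧
      MoB k ((X₁.filter (fun i => col1 l i = c ∧ a i = some false)).card) UF.card ∧
      MoB k ((X₁.filter (fun i => col1 l i = c ∧ a i = none)).card)
        ((X₂.filter (fun i => col2 l i = c)).card - UT.card - UF.card) := by
    intro c
    set Y := X₁.filter (fun i => col1 l i = c) with hY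
    set T := X₂.filter (fun i => col2 l i = c) with hT
    have hflt : ∀ v : Option Bool, X₁.filter (fun i => col1 l i = c ∧ a i = v)
        = Y.filter (fun i => a i = v) := by
      intro v
      rw [hY, Finset.filter_filter]
    have hsum : (X₁.filter (fun i => col1 l i = c ∧ a i = some true)).card
        + (X₁.filter (fun i => col1 l i = c ∧ a i = some false)).card
        + (X₁.filter (fun i => col1 l i = c ∧ a i = none)).card = cnt1 X₁ l c := by
      rw [hflt, hflt, hflt]
      exact tri_card Y a
    have hTcard : T.card = cnt2 X₂ l c := rfl
    have hMoB := h c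
    have hm : 1 ≤ 3 ^ k := Nat.one_le_pow _ _ (by norm_num)
    have h3 : (3 : ℕ) ^ (k + 1) = 3 * 3 ^ k := by ring
    have hin : (X₁.filter (fun i => col1 l i = c ∧ a i = some true)).card
        + (X₁.filter (fun i => col1 l i = c ∧ a i = some false)).card
        + (X₁.filter (fun i => col1 l i = c ∧ a i = none)).card = cnt2 X₂ l c ∨
        (3 * 3 ^ k ≤ (X₁.filter (fun i => col1 l i = c ∧ a i = some true)).card
        + (X₁.filter (fun i => col1 l i = c ∧ a i = some false)).card
        + (X₁.filter (fun i => col1 l i = c ∧ a i = none)).card ∧ 3 * 3 ^ k ≤ cnt2 X₂ l c) := by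
      rcases hMoB with he | ⟨ha, hb⟩
      · exact Or.inl (by omega)
      · exact Or.inr ⟨by omega, by omega⟩
    obtain ⟨t₁, t₂, t₃, hsum', m1, m2, m3⟩ := split_counts hm hin
    have ht₁ : t₁ ≤ T.card := by omega
    obtain ⟨UT, hUTsub, hUTcard⟩ := Finset.exists_subset_card_eq ht₁
    have ht₂ : t₂ ≤ (T \ UT).card := by
      rw [Finset.card_sdiff_of_subset hUTsub]
      omega
    obtain ⟨UF, hUFsub, hUFcard⟩ := Finset.exists_subset_card_eq ht₂
    refine ⟨UT, UF, hUTsub, hUFsub.trans (Finset.sdiff_subset), ?_, ?_, ?_, ?_⟩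
    · exact Finset.disjoint_left.2 fun i hiT hiF =>
        (Finset.mem_sdiff.1 (hUFsub hiF)).2 hiT
    · rw [hUTcard]
      exact m1
    · rw [hUFcard]
      exact m2
    · rw [hUTcard, hUFcard]
      have : T.card - t₁ - t₂ = t₃ := by omega
      rw [this]
      exact m3
  choose UT UF hUT hUF hdisj hT hF hN using key
  refine ⟨fun i => if i ∈ UT (col2 l i) then some true
      else if i ∈ UF (col2 l i) then some false else none, ?_⟩
  intro c v
  set g : PI n := fun i => if i ∈ UT (col2 l i) then some true
      else if i ∈ UF (col2 l i) then some false else none with hg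
  have hTc : ∀ i ∈ UT c, i ∈ X₂ ∧ col2 l i = c := by
    intro i hi
    exact Finset.mem_filter.1 (hUT c hi)
  have hFc : ∀ i ∈ UF c, i ∈ X₂ ∧ col2 l i = c := by
    intro i hi
    exact Finset.mem_filter.1 (hUF c hi)
  have hsetT : X₂.filter (fun i => col2 l i = c ∧ g i = some true) = UT c := by
    ext i
    simp only [Finset.mem_filter, hg]
    constructor
    · rintro ⟨_, hc, hgi⟩
      rw [hc] at hgi
      by_contra hni
      rw [if_neg hni] at hgi
      split at hgi <;> simp_all
    · intro hi
      obtain ⟨h1, h2⟩ := hTc i hi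
      rw [h2]
      exact ⟨h1, rfl, if_pos hi⟩
  have hsetF : X₂.filter (fun i => col2 l i = c ∧ g i = some false) = UF c := by
    ext i
    simp only [Finset.mem_filter, hg]
    constructor
    · rintro ⟨_, hc, hgi⟩
      rw [hc] at hgi
      by_contra hni
      by_cases hti : i ∈ UT c
      · rw [if_pos hti] at hgi; simp_all
      · rw [if_neg hti, if_neg hni] at hgi; simp_all
    · intro hi
      obtain ⟨h1, h2⟩ := hFc i hi
      rw [h2]
      have hnt : i ∉ UT c := Finset.disjoint_right.1 (hdisj c) hi
      exact ⟨h1, rfl, by rw [if_neg hnt, if_pos hi]⟩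
  have hflt2 : ∀ v : Option Bool, X₂.filter (fun i => col2 l i = c ∧ g i = v)
      = (X₂.filter (fun i => col2 l i = c)).filter (fun i => g i = v) := by
    intro v
    rw [Finset.filter_filter]
  have htri := tri_card (X₂.filter (fun i => col2 l i = c)) g
  rw [← hflt2, ← hflt2, ← hflt2, hsetT, hsetF] at htri
  rcases v with _ | _ | _
  · -- none
    have : (X₂.filter (fun i => col2 l i = c ∧ g i = none)).card
        = (X₂.filter (fun i => col2 l i = c)).card - (UT c).card - (UF c).card := by omega
    rw [this]
    exact hN c
  · -- some false
    rw [hsetF]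
    exact hF c
  · -- some true
    rw [hsetT]
    exact hT c

lemma forth {A₁ A₂ : Finset (Fin n)} {k : ℕ} {l : List (PI n × PI n)}
    (h : REL A₁ A₂ (k + 1) l) (a : PI n) : ∃ b, REL A₁ A₂ k ((a, b) :: l) := by
  classical
  obtain ⟨gA, hgA⟩ := forth_side A₁ A₂ l k (fun c => (h c).1) a
  obtain ⟨gB, hgB⟩ := forth_side A₁ᶜ A₂ᶜ l k (fun c => (h c).2) a
  refine ⟨fun i => if i ∈ A₂ then gA i else gB i, ?_⟩
  set b : PI n := fun i => if i ∈ A₂ then gA i else gB i with hb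
  intro c
  have hcol1 : ∀ i, col1 ((a, b) :: l) i = a i :: col1 l i := fun i => rfl
  have hcol2 : ∀ i, col2 ((a, b) :: l) i = b i :: col2 l i := fun i => rfl
  cases c with
  | nil =>
    constructor <;>
    · left
      simp [cnt1, cnt2, hcol1, hcol2]
  | cons v c =>
    have e1 : cnt1 A₁ ((a, b) :: l) (v :: c) = (A₁.filter (fun i => col1 l i = c ∧ a i = v)).card := by
      unfold cnt1
      congr 1
      apply Finset.filter_congr
      intro i _
      simp only [hcol1, List.cons.injEq]
      exact and_comm
    have e1' : cnt1 A₁ᶜ ((a, b) :: l) (v :: c) = (A₁ᶜ.filter (fun i => col1 l i = c ∧ a i = v)).card := by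
      unfold cnt1
      congr 1
      apply Finset.filter_congr
      intro i _
      simp only [hcol1, List.cons.injEq]
      exact and_comm
    have e2 : cnt2 A₂ ((a, b) :: l) (v :: c) = (A₂.filter (fun i => col2 l i = c ∧ gA i = v)).card := by
      unfold cnt2
      congr 1
      apply Finset.filter_congr
      intro i hi
      rw [hcol2]; simp only [List.cons.injEq, hb, if_pos hi]
      exact and_comm
    have e2' : cnt2 A₂ᶜ ((a, b) :: l) (v :: c) = (A₂ᶜ.filter (fun i => col2 l i = c ∧ gB i = v)).card := by
      unfold cnt2
      congr 1
      apply Finset.filter_congr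
      intro i hi
      rw [hcol2]; simp only [List.cons.injEq, hb, if_neg (Finset.mem_compl.1 hi)]
      exact and_comm
    rw [e1, e1', e2, e2']
    exact ⟨hgA c v, hgB c v⟩

lemma filter_card_congr (X : Finset (Fin n)) (p q : Fin n → Prop)
    [DecidablePred p] [DecidablePred q] (hpq : ∀ i, p i ↔ q i) :
    (X.filter p).card = (X.filter q).card := by
  congr 1
  apply Finset.filter_congr
  intro i _
  exact hpq i

lemma REL_swap {A₁ A₂ : Finset (Fin n)} {k : ℕ} {l : List (PI n × PI n)}
    (h : REL A₁ A₂ k l) : REL A₂ A₁ k (l.map Prod.swap) := by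
  have hc1 : ∀ i, col1 (l.map Prod.swap) i = col2 l i := by
    intro i
    simp only [col1, col2, List.map_map]
    rfl
  have hc2 : ∀ i, col2 (l.map Prod.swap) i = col1 l i := by
    intro i
    simp only [col1, col2, List.map_map]
    rfl
  intro c
  have e1 : cnt1 A₂ (l.map Prod.swap) c = cnt2 A₂ l c :=
    filter_card_congr _ _ _ (fun i => by rw [hc1])
  have e2 : cnt2 A₁ (l.map Prod.swap) c = cnt1 A₁ l c :=
    filter_card_congr _ _ _ (fun i => by rw [hc2])
  have e3 : cnt1 A₂ᶜ (l.map Prod.swap) c = cnt2 A₂ᶜ l c :=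
    filter_card_congr _ _ _ (fun i => by rw [hc1])
  have e4 : cnt2 A₁ᶜ (l.map Prod.swap) c = cnt1 A₁ᶜ l c :=
    filter_card_congr _ _ _ (fun i => by rw [hc2])
  unfold cnt1 cnt2 at *
  rw [e1, e2, e3, e4]
  exact ⟨((h c).1).symm, ((h c).2).symm⟩

lemma back {A₁ A₂ : Finset (Fin n)} {k : ℕ} {l : List (PI n × PI n)}
    (h : REL A₁ A₂ (k + 1) l) (b : PI n) : ∃ a, REL A₁ A₂ k ((a, b) :: l) := by
  obtain ⟨g, hg⟩ := forth (REL_swap h) b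
  refine ⟨g, ?_⟩
  have h2 := REL_swap hg
  have : ((b, g) :: l.map Prod.swap).map Prod.swap = (g, b) :: l := by
    simp [List.map_map]
  rwa [this] at h2

end Foil2


section Main
open Foil Foil2

lemma relmap1_iff {n : ℕ} (M : (Fin n → Bool) → Bool) (R : foilLang.Relations 1) (v : Fin 1 → PI n) :
    (foilStruct M).RelMap R v ↔ ∃ b : Fin n → Bool, v 0 = (fun i => some (b i)) ∧ M b = true :=
  Iff.rfl

lemma relmap2_iff {n : ℕ} (M : (Fin n → Bool) → Bool) (R : foilLang.Relations 2) (v : Fin 2 → PI n) :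
    (foilStruct M).RelMap R v ↔ Subs (v 0) (v 1) := Iff.rfl

theorem main_transfer {n : ℕ} (A₁ A₂ : Finset (Fin n)) (M : (Fin n → Bool) → Bool)
    (HM1 : ∀ b, M b = true ↔ ((∀ i ∈ A₁, b i = true) ∨ (∀ i ∈ A₁ᶜ, b i = true)))
    (HM2 : ∀ b, M b = true ↔ ((∀ i ∈ A₂, b i = true) ∨ (∀ i ∈ A₂ᶜ, b i = true)))
    {α : Type} {m : ℕ} (φ : foilLang.BoundedFormula α m) :
    ∀ (k : ℕ), qd φ ≤ k → ∀ (l : List (PI n × PI n)), REL A₁ A₂ k l →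
    ∀ (v₁ v₂ : α → PI n) (xs₁ xs₂ : Fin m → PI n),
    (∀ s : α ⊕ Fin m, (Sum.elim v₁ xs₁ s, Sum.elim v₂ xs₂ s) ∈ l) →
    (@BoundedFormula.Realize foilLang (PI n) (foilStruct M) α m φ v₁ xs₁ ↔
     @BoundedFormula.Realize foilLang (PI n) (foilStruct M) α m φ v₂ xs₂) := by
  letI : foilLang.Structure (PI n) := foilStruct M
  induction φ with
  | falsum =>
    intro k hk l hrel v₁ v₂ xs₁ xs₂ hmem
    exact Iff.rfl
  | equal t₁ t₂ =>
    intro k hk l hrel v₁ v₂ xs₁ xs₂ hmem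
    obtain ⟨s₁, rfl⟩ := term_var t₁
    obtain ⟨s₂, rfl⟩ := term_var t₂
    show Sum.elim v₁ xs₁ s₁ = Sum.elim v₁ xs₁ s₂ ↔ Sum.elim v₂ xs₂ s₁ = Sum.elim v₂ xs₂ s₂
    exact eq_iff hrel (hmem s₁) (hmem s₂)
  | rel R ts =>
    intro k hk l hrel v₁ v₂ xs₁ xs₂ hmem
    rename_i arity
    match arity, R with
    | 1, R =>
      obtain ⟨s₀, h₀⟩ := term_var (ts 0)
      show (foilStruct M).RelMap R _ ↔ (foilStruct M).RelMap R _
      rw [relmap1_iff, relmap1_iff]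
      have e₁ : Term.realize (Sum.elim v₁ xs₁) (ts 0) = Sum.elim v₁ xs₁ s₀ := by rw [h₀]; rfl
      have e₂ : Term.realize (Sum.elim v₂ xs₂) (ts 0) = Sum.elim v₂ xs₂ s₀ := by rw [h₀]; rfl
      simp only [e₁, e₂]
      exact pos_iff hrel (hmem s₀) HM1 HM2
    | 2, R =>
      obtain ⟨s₀, h₀⟩ := term_var (ts 0)
      obtain ⟨s₁, h₁⟩ := term_var (ts 1)
      show (foilStruct M).RelMap R _ ↔ (foilStruct M).RelMap R _
      rw [relmap2_iff, relmap2_iff]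
      have e₁ : Term.realize (Sum.elim v₁ xs₁) (ts 0) = Sum.elim v₁ xs₁ s₀ := by rw [h₀]; rfl
      have e₂ : Term.realize (Sum.elim v₂ xs₂) (ts 0) = Sum.elim v₂ xs₂ s₀ := by rw [h₀]; rfl
      have e₃ : Term.realize (Sum.elim v₁ xs₁) (ts 1) = Sum.elim v₁ xs₁ s₁ := by rw [h₁]; rfl
      have e₄ : Term.realize (Sum.elim v₂ xs₂) (ts 1) = Sum.elim v₂ xs₂ s₁ := by rw [h₁]; rfl
      simp only [e₁, e₂, e₃, e₄]
      exact subs_iff hrel (hmem s₀) (hmem s₁)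
  | imp f g ih1 ih2 =>
    intro k hk l hrel v₁ v₂ xs₁ xs₂ hmem
    have hk1 : qd f ≤ k := le_trans (le_max_left _ _) hk
    have hk2 : qd g ≤ k := le_trans (le_max_right _ _) hk
    exact imp_congr (ih1 k hk1 l hrel v₁ v₂ xs₁ xs₂ hmem) (ih2 k hk2 l hrel v₁ v₂ xs₁ xs₂ hmem)
  | all f ih =>
    intro k hk l hrel v₁ v₂ xs₁ xs₂ hmem
    have hk1 : 1 ≤ k := le_trans (Nat.le_add_left 1 (qd f)) hk
    obtain ⟨j, rfl⟩ : ∃ j, k = j + 1 := ⟨k - 1, by omega⟩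
    have hqf : qd f ≤ j := by
      have : qd f + 1 ≤ j + 1 := hk
      omega
    simp only [BoundedFormula.realize_all]
    have hmem' : ∀ (a b : PI n), ∀ s : α ⊕ Fin (_ + 1),
        (Sum.elim v₁ (Fin.snoc xs₁ a) s, Sum.elim v₂ (Fin.snoc xs₂ b) s) ∈ ((a, b) :: l) := by
      intro a b s
      rcases s with s | i
      · exact List.mem_cons_of_mem _ (hmem (Sum.inl s))
      · refine Fin.lastCases ?_ ?_ i
        · simp only [Sum.elim_inr, Fin.snoc_last]
          exact List.mem_cons_self
        · intro i'
          simp only [Sum.elim_inr, Fin.snoc_castSucc]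
          exact List.mem_cons_of_mem _ (hmem (Sum.inr i'))
    constructor
    · intro hall b
      obtain ⟨a, hrel'⟩ := back hrel b
      exact (ih j hqf ((a, b) :: l) hrel' v₁ v₂ (Fin.snoc xs₁ a) (Fin.snoc xs₂ b)
        (hmem' a b)).1 (hall a)
    · intro hall a
      obtain ⟨b, hrel'⟩ := forth hrel a
      exact (ih j hqf ((a, b) :: l) hrel' v₁ v₂ (Fin.snoc xs₁ a) (Fin.snoc xs₂ b)
        (hmem' a b)).2 (hall b)

end Main

section Concrete
open Foil Foil2

def Sset (a : ℕ) : Finset (Fin (a + (a + 1))) := Finset.univ.map (Fin.castAddEmb (a + 1))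

lemma mem_Sset (a : ℕ) (i : Fin (a + (a + 1))) : i ∈ Sset a ↔ (i : ℕ) < a := by
  simp only [Sset, Finset.mem_map, Finset.mem_univ, true_and]
  constructor
  · rintro ⟨j, rfl⟩
    exact j.2
  · intro h
    exact ⟨⟨i, h⟩, Fin.ext rfl⟩

lemma card_Sset (a : ℕ) : (Sset a).card = a := by simp [Sset]

lemma card_Sset_compl (a : ℕ) : (Sset a)ᶜ.card = a + 1 := by
  rw [Finset.card_compl, card_Sset]
  simp

def Mdl (a : ℕ) : (Fin (a + (a + 1)) → Bool) → Bool :=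
  fun b => decide ((∀ i ∈ Sset a, b i = true) ∨ (∀ i ∈ (Sset a)ᶜ, b i = true))

def uConc (a : ℕ) : PI (a + (a + 1)) := fun i => if (i : ℕ) < a then some true else none
def vConc (a : ℕ) : PI (a + (a + 1)) := fun i => if (i : ℕ) < a then none else some true

lemma HM1 (a : ℕ) : ∀ b, Mdl a b = true ↔
    ((∀ i ∈ Sset a, b i = true) ∨ (∀ i ∈ (Sset a)ᶜ, b i = true)) := fun b => by
  simp [Mdl]

lemma HM2 (a : ℕ) : ∀ b, Mdl a b = true ↔
    ((∀ i ∈ (Sset a)ᶜ, b i = true) ∨ (∀ i ∈ ((Sset a)ᶜ)ᶜ, b i = true)) := fun b => by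
  rw [compl_compl, HM1 a b]
  exact or_comm

lemma hMe (a : ℕ) : Mdl a (fun _ => true) = true := by
  rw [HM1]
  exact Or.inl (fun i _ => rfl)

lemma isSR_u (a : ℕ) : IsSR (Mdl a) (fun _ => true) (uConc a) := by
  constructor
  · intro i hi
    by_cases h : (i : ℕ) < a
    · simp [uConc, h]
    · simp [uConc, h] at hi
  · intro c hc
    rw [hMe, HM1]
    left
    intro i hi
    have h := (mem_Sset a i).1 hi
    have h2 := hc i (by simp [uConc, h])
    simpa [uConc, h] using h2

lemma undef_u (a : ℕ) : undefCard (uConc a) = a + 1 := by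
  have hs : {i | uConc a i = none} = (((Sset a)ᶜ : Finset (Fin (a + (a + 1)))) : Set (Fin (a + (a + 1)))) := by
    ext i
    simp only [Set.mem_setOf_eq, Finset.coe_compl, Set.mem_compl_iff, Finset.mem_coe,
      mem_Sset, uConc]
    split_ifs with h <;> simp [h]
  rw [undefCard, hs, Set.ncard_coe_finset, card_Sset_compl]

lemma undef_v (a : ℕ) : undefCard (vConc a) = a := by
  have hs : {i | vConc a i = none} = ((Sset a : Finset (Fin (a + (a + 1)))) : Set (Fin (a + (a + 1)))) := by
    ext i
    simp only [Set.mem_setOf_eq, Finset.mem_coe, mem_Sset, vConc]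
    split_ifs with h <;> simp [h]
  rw [undefCard, hs, Set.ncard_coe_finset, card_Sset]

lemma min_u (a : ℕ) : IsMinimumSR (Mdl a) (fun _ => true) (uConc a) := by
  refine ⟨isSR_u a, ?_⟩
  intro e'' hsr
  rw [undef_u]
  have key : (∀ i ∈ Sset a, e'' i ≠ none) ∨ (∀ i ∈ (Sset a)ᶜ, e'' i ≠ none) := by
    by_contra hcon
    push_neg at hcon
    obtain ⟨⟨i₀, hi₀, h₀⟩, ⟨i₁, hi₁, h₁⟩⟩ := hcon
    have hsub : Subs e'' (fun j => some ((e'' j).getD false)) := by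
      intro j hj
      rcases he : e'' j with _ | w
      · exact absurd he hj
      · simp [he]
    have hmc := hsr.2 _ hsub
    rw [hMe, HM1] at hmc
    rcases hmc with h | h
    · have := h i₀ hi₀
      simp [h₀] at this
    · have := h i₁ hi₁
      simp [h₁] at this
  rcases key with h | h
  · have hsub : {i | e'' i = none} ⊆ (((Sset a)ᶜ : Finset (Fin (a + (a + 1)))) : Set (Fin (a + (a + 1)))) := by
      intro i hi
      simp only [Finset.coe_compl, Set.mem_compl_iff, Finset.mem_coe]
      intro hiS
      exact h i hiS hi
    have hle := Set.ncard_le_ncard hsub (Set.toFinite _)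
    rwa [Set.ncard_coe_finset, card_Sset_compl] at hle
  · have hsub : {i | e'' i = none} ⊆ ((Sset a : Finset (Fin (a + (a + 1)))) : Set (Fin (a + (a + 1)))) := by
      intro i hi
      by_contra hne
      exact h i (Finset.mem_compl.2 hne) hi
    have hle := Set.ncard_le_ncard hsub (Set.toFinite _)
    rw [Set.ncard_coe_finset, card_Sset] at hle
    exact le_trans hle (Nat.le_succ a)

lemma REL_init (a d : ℕ) (ha : 3 ^ d ≤ a) :
    REL (Sset a) ((Sset a)ᶜ) d
      [((fun _ => some true : PI (a + (a + 1))), (fun _ => some true : PI (a + (a + 1)))),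
       (uConc a, vConc a)] := by
  set l₀ : List (PI (a + (a + 1)) × PI (a + (a + 1))) :=
    [((fun _ => some true), (fun _ => some true)), (uConc a, vConc a)] with hl₀
  have hcol1 : ∀ i, col1 l₀ i = [some true, uConc a i] := fun i => rfl
  have hcol2 : ∀ i, col2 l₀ i = [some true, vConc a i] := fun i => rfl
  intro c
  have c1 : cnt1 (Sset a) l₀ c = if c = [some true, some true] then a else 0 := by
    unfold cnt1
    split_ifs with hc
    · subst hc
      rw [Finset.filter_true_of_mem, card_Sset]
      intro i hi
      rw [hcol1]
      simp [uConc, (mem_Sset a i).1 hi]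
    · rw [Finset.filter_false_of_mem, Finset.card_empty]
      intro i hi
      rw [hcol1]
      have hv : uConc a i = some true := by simp [uConc, (mem_Sset a i).1 hi]
      rw [hv]
      exact fun h => hc h.symm
  have c2 : cnt2 ((Sset a)ᶜ) l₀ c = if c = [some true, some true] then a + 1 else 0 := by
    unfold cnt2
    split_ifs with hc
    · subst hc
      rw [Finset.filter_true_of_mem, card_Sset_compl]
      intro i hi
      rw [hcol2]
      have hni : ¬ (i : ℕ) < a := fun h => (Finset.mem_compl.1 hi) ((mem_Sset a i).2 h)
      simp [vConc, hni]
    · rw [Finset.filter_false_of_mem, Finset.card_empty]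
      intro i hi
      rw [hcol2]
      have hni : ¬ (i : ℕ) < a := fun h => (Finset.mem_compl.1 hi) ((mem_Sset a i).2 h)
      have hv : vConc a i = some true := by simp [vConc, hni]
      rw [hv]
      exact fun h => hc h.symm
  have c3 : cnt1 ((Sset a)ᶜ) l₀ c = if c = [some true, none] then a + 1 else 0 := by
    unfold cnt1
    split_ifs with hc
    · subst hc
      rw [Finset.filter_true_of_mem, card_Sset_compl]
      intro i hi
      rw [hcol1]
      have hni : ¬ (i : ℕ) < a := fun h => (Finset.mem_compl.1 hi) ((mem_Sset a i).2 h)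
      simp [uConc, hni]
    · rw [Finset.filter_false_of_mem, Finset.card_empty]
      intro i hi
      rw [hcol1]
      have hni : ¬ (i : ℕ) < a := fun h => (Finset.mem_compl.1 hi) ((mem_Sset a i).2 h)
      have hv : uConc a i = none := by simp [uConc, hni]
      rw [hv]
      exact fun h => hc h.symm
  have c4 : cnt2 (Sset a) l₀ c = if c = [some true, none] then a else 0 := by
    unfold cnt2
    split_ifs with hc
    · subst hc
      rw [Finset.filter_true_of_mem, card_Sset]
      intro i hi
      rw [hcol2]
      simp [vConc, (mem_Sset a i).1 hi]
    · rw [Finset.filter_false_of_mem, Finset.card_empty]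
      intro i hi
      rw [hcol2]
      have hv : vConc a i = none := by simp [vConc, (mem_Sset a i).1 hi]
      rw [hv]
      exact fun h => hc h.symm
  constructor
  · rw [c1, c2]
    split_ifs with h
    · exact Or.inr ⟨ha, by omega⟩
    · exact Or.inl rfl
  · rw [compl_compl, c3, c4]
    split_ifs with h
    · exact Or.inr ⟨by omega, ha⟩
    · exact Or.inl rfl

end Concrete

lemma realize_zero_ext {n : ℕ} (Mi : foilLang.Structure (PI n)) (φ : foilLang.BoundedFormula (Fin 2) 0)
    (v : Fin 2 → PI n) (xs₁ xs₂ : Fin 0 → PI n) :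
    @BoundedFormula.Realize foilLang (PI n) Mi (Fin 2) 0 φ v xs₁ ↔
    @BoundedFormula.Realize foilLang (PI n) Mi (Fin 2) 0 φ v xs₂ := by
  have h : xs₁ = xs₂ := funext fun x => x.elim0
  rw [h]

theorem stmt0 :
    ¬ ∃ φ : foilLang.Formula (Fin 2),
      ∀ (n : ℕ), 1 ≤ n → ∀ (M : (Fin n → Bool) → Bool) (e : Fin n → Bool) (e' : PI n),
        ((letI := foilStruct M; φ.Realize ![fun i => some (e i), e']) ↔ IsMinimumSR M e e') := by
  rintro ⟨φ, hφ⟩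
  classical
  set d := qd (φ : foilLang.BoundedFormula (Fin 2) 0) with hd
  set a := 3 ^ d with hadef
  have ha1 : 1 ≤ a := Nat.one_le_pow _ _ (by norm_num)
  have hn : 1 ≤ a + (a + 1) := by omega
  have h1 := hφ (a + (a + 1)) hn (Mdl a) (fun _ => true) (uConc a)
  have h2 := hφ (a + (a + 1)) hn (Mdl a) (fun _ => true) (vConc a)
  have hreal_u := h1.2 (min_u a)
  set l₀ : List (PI (a + (a + 1)) × PI (a + (a + 1))) :=
    [((fun _ => some true), (fun _ => some true)), (uConc a, vConc a)] with hl₀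
  have hmem : ∀ s : Fin 2 ⊕ Fin 0,
      (Sum.elim ![(fun _ => some true : PI (a + (a + 1))), uConc a] default s,
       Sum.elim ![(fun _ => some true : PI (a + (a + 1))), vConc a] default s) ∈ l₀ := by
    rintro (x | x)
    · fin_cases x
      · exact List.mem_cons_self
      · exact List.mem_cons_of_mem _ (List.mem_cons_self)
    · exact x.elim0
  have htrans := main_transfer (Sset a) ((Sset a)ᶜ) (Mdl a) (HM1 a) (HM2 a) φ d le_rfl l₀
    (REL_init a d le_rfl) ![(fun _ => some true), uConc a] ![(fun _ => some true), vConc a]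
    default default hmem
  have hreal_u' : @BoundedFormula.Realize foilLang (PI (a + (a + 1))) (foilStruct (Mdl a))
      (Fin 2) 0 φ ![(fun _ => some true : PI (a + (a + 1))), uConc a] default :=
    (realize_zero_ext (foilStruct (Mdl a)) φ _ _ _).1 hreal_u
  have hreal_v := htrans.1 hreal_u'
  have hmin_v := h2.1 ((realize_zero_ext (foilStruct (Mdl a)) φ
    ![(fun _ => some true : PI (a + (a + 1))), vConc a] default _).1 hreal_v)
  have hcontra := hmin_v.2 (uConc a) (isSR_u a)
  rw [undef_u, undef_v] at hcontra
  omega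
end

section
/- For every k ≥ 0 and all X, Y ⊆ ℕ ⊕ ℕ with X ↔_{3^{k+1}} Y, the following hold: (i) for every well-formed X₁ ⊆ X there exists a well-formed Y₁ ⊆ Y such that X₁ ↔_{3^k} Y₁ and X ∖ X₁ ↔_{3^k} Y ∖ Y₁; and (ii) for every well-formed Y₁ ⊆ Y there exists a well-formed X₁ ⊆ X such that X₁ ↔_{3^k} Y₁ and X ∖ X₁ ↔_{3^k} Y ∖ Y₁. -/
open Set

/-- The index set `X_{U∖Ū}`: indices `i` with `a_i ∈ X` and `ā_i ∉ X`. -/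
def idxU (X : Set (ℕ ⊕ ℕ)) : Set ℕ := {i | Sum.inl i ∈ X ∧ Sum.inr i ∉ X}

/-- The index set `X_{U∩Ū}`: indices `i` with `a_i ∈ X` and `ā_i ∈ X`. -/
def idxUI (X : Set (ℕ ⊕ ℕ)) : Set ℕ := {i | Sum.inl i ∈ X ∧ Sum.inr i ∈ X}

/-- The index set `X_{Ū∖U}`: indices `i` with `ā_i ∈ X` and `a_i ∉ X`. -/
def idxB (X : Set (ℕ ⊕ ℕ)) : Set ℕ := {i | Sum.inr i ∈ X ∧ Sum.inl i ∉ X}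

/-- The `ℓ`-type of a subset `X` of `U ∪ Ū`. -/
noncomputable def lType (ℓ : ℕ) (X : Set (ℕ ⊕ ℕ)) : ℕ∞ × ℕ∞ × ℕ∞ :=
  (min (ℓ : ℕ∞) (idxU X).encard, min (ℓ : ℕ∞) (idxUI X).encard,
    min (ℓ : ℕ∞) (idxB X).encard)

/-- `X` is well-formed: for every `i`, at most one of `a_i`, `ā_i` belongs to `X`. -/
def WFSet (X : Set (ℕ ⊕ ℕ)) : Prop := ∀ i : ℕ, ¬ (Sum.inl i ∈ X ∧ Sum.inr i ∈ X)

lemma min_add_aux (l x y : ℕ∞) : min l (x + y) = min l (min l x + min l y) := by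
  rcases le_total l x with h | h
  · rw [min_eq_left (h.trans le_self_add), min_eq_left h, min_eq_left le_self_add]
  · rw [min_eq_right h]
    rcases le_total l y with h2 | h2
    · rw [min_eq_left (h2.trans le_add_self), min_eq_left h2, min_eq_left le_add_self]
    · rw [min_eq_right h2]

lemma min_add_congr (l a b a' b' : ℕ∞) (ha : min l a = min l a') (hb : min l b = min l b') :
    min l (a + b) = min l (a' + b') := by
  rw [min_add_aux, ha, hb, ← min_add_aux]

lemma min_lower {a b : ℕ∞} (hab : a ≤ b) {x y : ℕ∞} (h : min b x = min b y) :
    min a x = min a y := by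
  rw [← min_eq_left hab, min_assoc, min_assoc, h]

lemma add_lt_add' {a b c d : ℕ∞} (h1 : a < b) (h2 : c < d) : a + c < b + d :=
  WithTop.add_lt_add_of_lt_of_le (ne_top_of_lt h2) h1 h2.le

lemma realize (A : Set ℕ) (b c : ℕ∞) (hbc : b + c = A.encard) (hfin : b ≠ ⊤ ∨ c ≠ ⊤) :
    ∃ B, B ⊆ A ∧ B.encard = b ∧ (A \ B).encard = c := by
  rcases hfin with hb | hc
  · obtain ⟨B, hBA, hB⟩ := Set.exists_subset_encard_eq (le_trans le_self_add hbc.le)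
    refine ⟨B, hBA, hB, ?_⟩
    have h := Set.encard_diff_add_encard_of_subset hBA
    rw [hB, ← hbc, add_comm b c] at h
    exact WithTop.add_right_cancel hb h
  · obtain ⟨C, hCA, hC⟩ := Set.exists_subset_encard_eq (le_trans le_add_self hbc.le)
    refine ⟨A \ C, Set.diff_subset, ?_, ?_⟩
    · have h := Set.encard_diff_add_encard_of_subset hCA
      rw [hC, ← hbc] at h
      exact WithTop.add_right_cancel hc h
    · rw [Set.diff_diff_cancel_left hCA, hC]

lemma split2 (l1 l2 : ℕ∞) (h1 : l1 ≠ ⊤) (h2 : l2 ≠ ⊤) (s t : ℕ∞) (A : Set ℕ)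
    (h : min (l1 + l2) (s + t) = min (l1 + l2) A.encard) :
    ∃ B, B ⊆ A ∧ min l1 B.encard = min l1 s ∧ min l2 (A \ B).encard = min l2 t := by
  rcases lt_or_ge (s + t) (l1 + l2) with hlt | hle
  · have hA : s + t = A.encard := by
      rcases le_total (l1 + l2) A.encard with hc | hc
      · rw [min_eq_right hlt.le, min_eq_left hc] at h
        exact absurd h hlt.ne
      · rwa [min_eq_right hlt.le, min_eq_right hc] at h
    have hst : s + t ≠ ⊤ := ne_top_of_lt hlt
    have hsfin : s ≠ ⊤ := fun hs => hst (by simp [hs])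
    obtain ⟨B, hBA, hB, hB2⟩ := realize A s t hA (Or.inl hsfin)
    exact ⟨B, hBA, by rw [hB], by rw [hB2]⟩
  · have hAL : l1 + l2 ≤ A.encard := by
      rw [min_eq_left hle] at h
      exact min_eq_left_iff.mp h.symm
    rcases lt_or_ge s l1 with hs | hs
    · have hsfin : s ≠ ⊤ := ne_top_of_lt hs
      have hsA : s ≤ A.encard := le_trans (le_trans hs.le le_self_add) hAL
      obtain ⟨B, hBA, hB, hB2⟩ := realize A s (A.encard - s) (add_tsub_cancel_of_le hsA)
        (Or.inl hsfin)
      refine ⟨B, hBA, by rw [hB], ?_⟩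
      have ht : l2 ≤ t := by
        by_contra hc
        push_neg at hc
        exact absurd hle (not_le.2 (add_lt_add' hs hc))
      have ht2 : l2 ≤ A.encard - s := ENat.le_sub_of_add_le_left hsfin (le_trans (add_le_add_left hs.le l2) hAL)
      rw [hB2, min_eq_left ht2, min_eq_left ht]
    · rcases lt_or_ge t l2 with ht | ht
      · have htfin : t ≠ ⊤ := ne_top_of_lt ht
        have htA : t ≤ A.encard := le_trans (le_trans ht.le le_add_self) hAL
        obtain ⟨B, hBA, hB, hB2⟩ := realize A (A.encard - t) t (tsub_add_cancel_of_le htA)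
          (Or.inr htfin)
        refine ⟨B, hBA, ?_, by rw [hB2]⟩
        have hs2 : l1 ≤ A.encard - t := ENat.le_sub_of_add_le_left htfin (by rw [add_comm] at hAL; exact le_trans (add_le_add_left ht.le l1) hAL)
        rw [hB, min_eq_left hs2, min_eq_left hs]
      · have hl1A : l1 ≤ A.encard := le_trans le_self_add hAL
        obtain ⟨B, hBA, hB, hB2⟩ := realize A l1 (A.encard - l1) (add_tsub_cancel_of_le hl1A)
          (Or.inl h1)
        refine ⟨B, hBA, ?_, ?_⟩
        · rw [hB, min_self, min_eq_left hs]
        · rw [hB2, min_eq_left (ENat.le_sub_of_add_le_left h1 hAL), min_eq_left ht]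

lemma inter_union_left (P Q R S : Set ℕ) (hQ : Q ⊆ P) (hR : R ⊆ S) (hPS : Disjoint P S) :
    P ∩ (Q ∪ R) = Q := by
  ext i
  constructor
  · rintro ⟨h1, h2 | h2⟩
    · exact h2
    · exact (Set.disjoint_left.mp hPS h1 (hR h2)).elim
  · intro hq
    exact ⟨hQ hq, Or.inl hq⟩

lemma diff_union_right (P Q R S : Set ℕ) (hR : R ⊆ S) (hPS : Disjoint P S) :
    P \ (Q ∪ R) = P \ Q := by
  ext i
  simp only [Set.mem_diff, Set.mem_union]
  constructor
  · rintro ⟨hp, h2⟩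
    exact ⟨hp, fun hq => h2 (Or.inl hq)⟩
  · rintro ⟨hp, h2⟩
    refine ⟨hp, ?_⟩
    rintro (hq | hr)
    · exact h2 hq
    · exact Set.disjoint_left.mp hPS hp (hR hr)

lemma classes (X Z : Set (ℕ ⊕ ℕ)) (hZX : Z ⊆ X) (hWF : WFSet Z) :
    idxU Z = (idxU X ∩ {i | Sum.inl i ∈ Z}) ∪ (idxUI X ∩ {i | Sum.inl i ∈ Z}) ∧
    idxUI Z = ∅ ∧
    idxB Z = (idxB X ∩ {i | Sum.inr i ∈ Z}) ∪ (idxUI X ∩ {i | Sum.inr i ∈ Z}) ∧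
    idxU (X \ Z) = (idxU X \ {i | Sum.inl i ∈ Z}) ∪ (idxUI X ∩ {i | Sum.inr i ∈ Z}) ∧
    idxUI (X \ Z) = (idxUI X \ {i | Sum.inl i ∈ Z}) \ {i | Sum.inr i ∈ Z} ∧
    idxB (X \ Z) = (idxB X \ {i | Sum.inr i ∈ Z}) ∪ (idxUI X ∩ {i | Sum.inl i ∈ Z}) := by
  refine ⟨?_, ?_, ?_, ?_, ?_, ?_⟩ <;>
  · ext i
    have h1 := hWF i
    have h2 : Sum.inl i ∈ Z → Sum.inl i ∈ X := fun h => hZX h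
    have h3 : Sum.inr i ∈ Z → Sum.inr i ∈ X := fun h => hZX h
    simp only [idxU, idxUI, idxB, Set.mem_union, Set.mem_inter_iff, Set.mem_diff,
      Set.mem_setOf_eq, Set.mem_empty_iff_false, iff_false]
    tauto

lemma key (l : ℕ) (X Y : Set (ℕ ⊕ ℕ))
    (h : lType (3 * l) X = lType (3 * l) Y)
    (X₁ : Set (ℕ ⊕ ℕ)) (hs : X₁ ⊆ X) (hw : WFSet X₁) :
    ∃ Y₁, Y₁ ⊆ Y ∧ WFSet Y₁ ∧ lType l X₁ = lType l Y₁ ∧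
      lType l (X \ X₁) = lType l (Y \ Y₁) := by
  simp only [lType, Prod.mk.injEq] at h
  obtain ⟨hU, hM, hB⟩ := h
  have hcast : ((3 * l : ℕ) : ℕ∞) = (l : ℕ∞) + l + l := by push_cast; ring
  rw [hcast] at hU hM hB
  have hl : (l : ℕ∞) ≠ ⊤ := ENat.coe_ne_top l
  have hll : (l : ℕ∞) + l ≠ ⊤ := WithTop.add_ne_top.2 ⟨hl, hl⟩
  -- abbreviations
  set SL : Set ℕ := {i | Sum.inl i ∈ X₁} with hSLdef
  set SR : Set ℕ := {i | Sum.inr i ∈ X₁} with hSRdef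
  obtain ⟨eX1, eX2, eX3, eX4, eX5, eX6⟩ := classes X X₁ hs hw
  -- disjointness on the X side
  have dAM : Disjoint (idxU X) (idxUI X) := by
    rw [Set.disjoint_left]; rintro i ⟨_, h2⟩ ⟨_, h4⟩; exact h2 h4
  have dBM : Disjoint (idxB X) (idxUI X) := by
    rw [Set.disjoint_left]; rintro i ⟨_, h2⟩ ⟨h3, _⟩; exact h2 h3
  have dAM' : Disjoint (idxU Y) (idxUI Y) := by
    rw [Set.disjoint_left]; rintro i ⟨_, h2⟩ ⟨_, h4⟩; exact h2 h4
  have dBM' : Disjoint (idxB Y) (idxUI Y) := by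
    rw [Set.disjoint_left]; rintro i ⟨_, h2⟩ ⟨h3, _⟩; exact h2 h3
  have dAB' : Disjoint (idxU Y) (idxB Y) := by
    rw [Set.disjoint_left]; rintro i ⟨_, h2⟩ ⟨h3, _⟩; exact h2 h3
  -- cardinality sums
  have hAsum : (idxU X ∩ SL).encard + (idxU X \ SL).encard = (idxU X).encard := by
    rw [add_comm]; exact Set.encard_diff_add_encard_inter _ _
  have hBsum : (idxB X ∩ SR).encard + (idxB X \ SR).encard = (idxB X).encard := by
    rw [add_comm]; exact Set.encard_diff_add_encard_inter _ _
  have hMsum : (idxUI X ∩ SL).encard + (idxUI X \ SL).encard = (idxUI X).encard := by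
    rw [add_comm]; exact Set.encard_diff_add_encard_inter _ _
  have hMsum2 : ((idxUI X \ SL) ∩ SR).encard + ((idxUI X \ SL) \ SR).encard
      = (idxUI X \ SL).encard := by
    rw [add_comm]; exact Set.encard_diff_add_encard_inter _ _
  have eMb : (idxUI X \ SL) ∩ SR = idxUI X ∩ SR := by
    ext i
    simp only [Set.mem_inter_iff, Set.mem_diff, hSLdef, hSRdef, Set.mem_setOf_eq]
    constructor
    · rintro ⟨⟨ha, _⟩, hb⟩; exact ⟨ha, hb⟩
    · rintro ⟨ha, hb⟩; exact ⟨⟨ha, fun hc => hw i ⟨hc, hb⟩⟩, hb⟩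
  -- splits on the Y side
  obtain ⟨A1', hA1'sub, hA1, hA2⟩ := split2 l l hl hl ((idxU X ∩ SL).encard)
    ((idxU X \ SL).encard) (idxU Y) (by rw [hAsum]; exact min_lower le_self_add hU)
  obtain ⟨B1', hB1'sub, hB1, hB2⟩ := split2 l l hl hl ((idxB X ∩ SR).encard)
    ((idxB X \ SR).encard) (idxB Y) (by rw [hBsum]; exact min_lower le_self_add hB)
  obtain ⟨Ma', hMa'sub, hMa1, hMa2⟩ := split2 l (l + l) hl hll ((idxUI X ∩ SL).encard)
    ((idxUI X \ SL).encard) (idxUI Y) (by rw [hMsum, ← add_assoc]; exact hM)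
  obtain ⟨Mb', hMb'sub, hMb1, hMb2⟩ := split2 l l hl hl (((idxUI X \ SL) ∩ SR).encard)
    (((idxUI X \ SL) \ SR).encard) (idxUI Y \ Ma') (by rw [hMsum2]; exact hMa2.symm)
  have hMb'M : Mb' ⊆ idxUI Y := hMb'sub.trans Set.diff_subset
  rw [← hSLdef] at eX1 eX4 eX5 eX6
  rw [← hSRdef] at eX3 eX4 eX5 eX6
  have hMb1' : min (l : ℕ∞) Mb'.encard = min (l : ℕ∞) (idxUI X ∩ SR).encard := by
    rw [← eMb]; exact hMb1
  -- define Y₁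
  set Y₁c : Set (ℕ ⊕ ℕ) := Sum.inl '' (A1' ∪ Ma') ∪ Sum.inr '' (B1' ∪ Mb') with hY₁def
  have memL : ∀ i : ℕ, Sum.inl i ∈ Y₁c ↔ i ∈ A1' ∪ Ma' := by
    intro i
    constructor
    · rintro (⟨j, hj, hje⟩ | ⟨j, hj, hje⟩)
      · obtain rfl : j = i := Sum.inl.inj hje
        exact hj
      · exact absurd hje (by simp)
    · intro hi
      exact Or.inl ⟨i, hi, rfl⟩
  have memR : ∀ i : ℕ, Sum.inr i ∈ Y₁c ↔ i ∈ B1' ∪ Mb' := by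
    intro i
    constructor
    · rintro (⟨j, hj, hje⟩ | ⟨j, hj, hje⟩)
      · exact absurd hje (by simp)
      · obtain rfl : j = i := Sum.inr.inj hje
        exact hj
    · intro hi
      exact Or.inr ⟨i, hi, rfl⟩
  have hsubY : Y₁c ⊆ Y := by
    rintro x (⟨i, hi, rfl⟩ | ⟨i, hi, rfl⟩)
    · rcases hi with hi | hi
      · exact (hA1'sub hi).1
      · exact (hMa'sub hi).1
    · rcases hi with hi | hi
      · exact (hB1'sub hi).1
      · exact (hMb'M hi).2
  have hwfY : WFSet Y₁c := by
    intro i ⟨hL', hR'⟩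
    have h1' : i ∈ A1' ∪ Ma' := (memL i).mp hL'
    have h2' : i ∈ B1' ∪ Mb' := (memR i).mp hR'
    rcases h1' with h1' | h1' <;> rcases h2' with h2' | h2'
    · exact Set.disjoint_left.mp dAB' (hA1'sub h1') (hB1'sub h2')
    · exact Set.disjoint_left.mp dAM' (hA1'sub h1') (hMb'M h2')
    · exact Set.disjoint_left.mp dBM' (hB1'sub h2') (hMa'sub h1')
    · exact (hMb'sub h2').2 h1'
  obtain ⟨eY1, eY2, eY3, eY4, eY5, eY6⟩ := classes Y Y₁c hsubY hwfY
  have cSL : {i | Sum.inl i ∈ Y₁c} = A1' ∪ Ma' := Set.ext memL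
  have cSR : {i | Sum.inr i ∈ Y₁c} = B1' ∪ Mb' := Set.ext memR
  rw [cSL] at eY1 eY4 eY5 eY6
  rw [cSR] at eY3 eY4 eY5 eY6
  have iA : idxU Y ∩ (A1' ∪ Ma') = A1' :=
    inter_union_left _ _ _ (idxUI Y) hA1'sub hMa'sub dAM'
  have iM : idxUI Y ∩ (A1' ∪ Ma') = Ma' := by
    rw [Set.union_comm]
    exact inter_union_left _ _ _ (idxU Y) hMa'sub hA1'sub dAM'.symm
  have iB : idxB Y ∩ (B1' ∪ Mb') = B1' :=
    inter_union_left _ _ _ (idxUI Y) hB1'sub hMb'M dBM'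
  have iM2 : idxUI Y ∩ (B1' ∪ Mb') = Mb' := by
    rw [Set.union_comm]
    exact inter_union_left _ _ _ (idxB Y) hMb'M hB1'sub dBM'.symm
  have jA : idxU Y \ (A1' ∪ Ma') = idxU Y \ A1' :=
    diff_union_right _ _ _ (idxUI Y) hMa'sub dAM'
  have jM : idxUI Y \ (A1' ∪ Ma') = idxUI Y \ Ma' := by
    rw [Set.union_comm]
    exact diff_union_right _ _ _ (idxU Y) hA1'sub dAM'.symm
  have jB : idxB Y \ (B1' ∪ Mb') = idxB Y \ B1' :=
    diff_union_right _ _ _ (idxUI Y) hMb'M dBM'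
  have jM2 : (idxUI Y \ Ma') \ (B1' ∪ Mb') = (idxUI Y \ Ma') \ Mb' := by
    rw [Set.union_comm]
    exact diff_union_right _ _ _ (idxB Y) hB1'sub (dBM'.symm.mono_left Set.diff_subset)
  rw [iA, iM] at eY1
  rw [iB, iM2] at eY3
  rw [jA, iM2] at eY4
  rw [jM, jM2] at eY5
  rw [jB, iM] at eY6
  -- disjointness facts for cardinality of unions
  have d1x : Disjoint (idxU X ∩ SL) (idxUI X ∩ SL) :=
    dAM.mono Set.inter_subset_left Set.inter_subset_left
  have d3x : Disjoint (idxB X ∩ SR) (idxUI X ∩ SR) :=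
    dBM.mono Set.inter_subset_left Set.inter_subset_left
  have d4x : Disjoint (idxU X \ SL) (idxUI X ∩ SR) :=
    dAM.mono Set.diff_subset Set.inter_subset_left
  have d6x : Disjoint (idxB X \ SR) (idxUI X ∩ SL) :=
    dBM.mono Set.diff_subset Set.inter_subset_left
  have d1y : Disjoint A1' Ma' := dAM'.mono hA1'sub hMa'sub
  have d3y : Disjoint B1' Mb' := dBM'.mono hB1'sub hMb'M
  have d4y : Disjoint (idxU Y \ A1') Mb' := dAM'.mono Set.diff_subset hMb'M
  have d6y : Disjoint (idxB Y \ B1') Ma' := dBM'.mono Set.diff_subset hMa'sub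
  refine ⟨Y₁c, hsubY, hwfY, ?_, ?_⟩
  · simp only [lType, Prod.mk.injEq]
    refine ⟨?_, ?_, ?_⟩
    · rw [eX1, eY1, Set.encard_union_eq d1x, Set.encard_union_eq d1y]
      exact min_add_congr _ _ _ _ _ hA1.symm hMa1.symm
    · rw [eX2, eY2]
    · rw [eX3, eY3, Set.encard_union_eq d3x, Set.encard_union_eq d3y]
      exact min_add_congr _ _ _ _ _ hB1.symm hMb1'.symm
  · simp only [lType, Prod.mk.injEq]
    refine ⟨?_, ?_, ?_⟩
    · rw [eX4, eY4, Set.encard_union_eq d4x, Set.encard_union_eq d4y]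
      exact min_add_congr _ _ _ _ _ hA2.symm hMb1'.symm
    · rw [eX5, eY5]
      exact hMb2.symm
    · rw [eX6, eY6, Set.encard_union_eq d6x, Set.encard_union_eq d6y]
      exact min_add_congr _ _ _ _ _ hB2.symm hMa1.symm

theorem stmt5 (k : ℕ) (X Y : Set (ℕ ⊕ ℕ))
    (h : lType (3 ^ (k + 1)) X = lType (3 ^ (k + 1)) Y) :
    (∀ X₁ : Set (ℕ ⊕ ℕ), X₁ ⊆ X → WFSet X₁ →
      ∃ Y₁ : Set (ℕ ⊕ ℕ), Y₁ ⊆ Y ∧ WFSet Y₁ ∧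
        lType (3 ^ k) X₁ = lType (3 ^ k) Y₁ ∧
        lType (3 ^ k) (X \ X₁) = lType (3 ^ k) (Y \ Y₁)) ∧
    (∀ Y₁ : Set (ℕ ⊕ ℕ), Y₁ ⊆ Y → WFSet Y₁ →
      ∃ X₁ : Set (ℕ ⊕ ℕ), X₁ ⊆ X ∧ WFSet X₁ ∧
        lType (3 ^ k) X₁ = lType (3 ^ k) Y₁ ∧
        lType (3 ^ k) (X \ X₁) = lType (3 ^ k) (Y \ Y₁)) := by
  rw [show 3 ^ (k + 1) = 3 * 3 ^ k from by ring] at h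
  constructor
  · intro X₁ hX₁ hw
    exact key (3 ^ k) X Y h X₁ hX₁ hw
  · intro Y₁ hY₁ hw
    obtain ⟨X₁, h1, h2, h3, h4⟩ := key (3 ^ k) Y X h.symm Y₁ hY₁ hw
    exact ⟨X₁, h1, h2, h3.symm, h4.symm⟩
end
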